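/- arXiv:2005.05966 — 5 statements merged into one kernel-verified Lean document; each statement's English description precedes it below -/
import Mathlib

section
/- For g of type A_n with adapted sequence ι and the associated function P, define the linear forms box^A_j(s) = x_{s+P(j), j} − x_{s+P(j-1)+1, j-1} for 1 ≤ j ≤ n+1 and s ∈ ℤ (with x_{m,0} = x_{m,n+1} = 0, and x_{m,i} = 0 for m ≤ 0). Then box^A_{j+1}(s) = box^A_j(s) − β_{s+P(j), j} for all 1 ≤ j ≤ n and s ≥ 1 − P(j), where β_{s,j} denotes the linear form β_k under the re-indexing x_k = x_{s,j} determined by ι. -/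
/-! Combinatorics of an adapted sequence `ι` for a classical Lie algebra, and the
column-tableau linear forms of Kanakubo–Nakashima in re-indexed coordinates `x_{m,j}`
(the coordinate for the `m`-th occurrence of the index `j` in `ι`). -/

noncomputable section

/-- First position `m ≥ 1` with `ι m ∈ {i, j}`. -/
def firstBoth (ι : ℕ → ℕ) (i j : ℕ) : ℕ := sInf {m | 1 ≤ m ∧ (ι m = i ∨ ι m = j)}

/-- `p_{i,j} = 1` if `i` occurs before `j` in `ι`, and `0` otherwise. -/
def pOf (ι : ℕ → ℕ) (i j : ℕ) : ℕ := if ι (firstBoth ι i j) = i then 1 else 0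

/-- `ι⁽ⁱ⁾`, the first position of `ι` at which `i` occurs. -/
def firstOcc (ι : ℕ → ℕ) (i : ℕ) : ℕ := sInf {m | 1 ≤ m ∧ ι m = i}

/-- `P(k) = p_{2,1} + p_{3,2} + ⋯ + p_{k,k-1}` (so `P 0 = P 1 = 0`). -/
def Pof (ι : ℕ → ℕ) (k : ℕ) : ℕ := ∑ i ∈ Finset.Icc 2 k, pOf ι i (i - 1)

/-- The condition that every index `1,…,n` occurs infinitely often in `ι` and
consecutive entries of `ι` differ. -/
def SeqCond (n : ℕ) (ι : ℕ → ℕ) : Prop :=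
  (∀ m, 1 ≤ m → 1 ≤ ι m ∧ ι m ≤ n) ∧
  (∀ m, 1 ≤ m → ι m ≠ ι (m + 1)) ∧
  (∀ i, 1 ≤ i → i ≤ n → ∀ N : ℕ, ∃ m, N < m ∧ ι m = i)

/-- `ι` is adapted to the type `A_n` Cartan matrix: for adjacent indices `i, j`, any two
consecutive members of the subsequence of `ι` consisting of `i`'s and `j`'s differ. -/
def AdaptedA (n : ℕ) (ι : ℕ → ℕ) : Prop :=
  ∀ i j : ℕ, 1 ≤ i → i ≤ n → 1 ≤ j → j ≤ n → (i = j + 1 ∨ j = i + 1) →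
    ∀ m m' : ℕ, 1 ≤ m → m < m' → (ι m = i ∨ ι m = j) → (ι m' = i ∨ ι m' = j) →
      (∀ r, m < r → r < m' → ι r ≠ i ∧ ι r ≠ j) → ι m ≠ ι m'

/-- Linear forms on `ℚ^∞`, presented by their coefficients in the re-indexed
coordinates `x_{m,j}`. -/
abbrev LinF : Type := ℤ × ℕ → ℚ

/-- The coordinate functional `x_{m,j}` (zero when `m ≤ 0`, `j = 0` or `j > n`). -/
def XT (n : ℕ) (m : ℤ) (j : ℕ) : LinF :=
  fun q => if q = (m, j) ∧ 1 ≤ m ∧ 1 ≤ j ∧ j ≤ n then 1 else 0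

/-- The box `⌈j⌉^A_s = x_{s+P(j),j} − x_{s+P(j−1)+1,j−1}` of type `A_n`. -/
def boxA (n : ℕ) (ι : ℕ → ℕ) (j : ℕ) (s : ℤ) : LinF :=
  XT n (s + (Pof ι j : ℤ)) j - XT n (s + (Pof ι (j - 1) : ℤ) + 1) (j - 1)

/-- The column tableau `[j₁,…,j_k]^A_s = Σ_{i=1}^k ⌈j_i⌉^A_{s+k−i}` (here `j` is
`0`-indexed: `j ⟨0⟩ = j₁, …`). -/
def tabA (n : ℕ) (ι : ℕ → ℕ) {k : ℕ} (j : Fin k → ℕ) (s : ℤ) : LinF :=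
  ∑ i : Fin k, boxA n ι (j i) (s + (k : ℤ) - 1 - ((i : ℕ) : ℤ))

/-- The Nakashima–Zelevinsky form `β_{m,j}` in re-indexed coordinates, for `ι` adapted
to a type `A` Cartan matrix:
`β_{m,j} = x_{m,j} + x_{m+1,j} − x_{m+p_{j−1,j},j−1} − x_{m+p_{j+1,j},j+1}`. -/
def betaA (n : ℕ) (ι : ℕ → ℕ) (m : ℤ) (j : ℕ) : LinF :=
  XT n m j + XT n (m + 1) j - XT n (m + (pOf ι (j - 1) j : ℤ)) (j - 1)
    - XT n (m + (pOf ι (j + 1) j : ℤ)) (j + 1)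

/-- Affine-linear forms: a constant term together with a linear form. -/
abbrev AffF : Type := ℚ × LinF

/-- The form `β⁽⁻⁾_{m,j}` in re-indexed coordinates: `β_{m−1,j}` when `m ≥ 2`, and the
`λ`-dependent form with constant term `−⟨h_j, λ⟩` when `m = 1`. -/
def betaMA (n : ℕ) (ι : ℕ → ℕ) (lam : ℕ → ℤ) (m : ℤ) (j : ℕ) : AffF :=
  ((if m = 1 then -(lam j : ℚ) else 0), betaA n ι (m - 1) j)

/-- The operator `Ŝ_{m,j}` of the polyhedral realization of `B(λ)` in re-indexed
coordinates. -/
def ShatA (n : ℕ) (ι : ℕ → ℕ) (lam : ℕ → ℤ) (m : ℤ) (j : ℕ) (φ : AffF) : AffF :=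
  if 0 < φ.2 (m, j) then φ - φ.2 (m, j) • (((0 : ℚ), betaA n ι m j) : AffF)
  else φ - φ.2 (m, j) • betaMA n ι lam m j

end

lemma XT_index_zero (n : ℕ) (m : ℤ) : XT n m 0 = 0 := by
  funext q; simp [XT]

lemma firstBoth_comm (ι : ℕ → ℕ) (i j : ℕ) : firstBoth ι i j = firstBoth ι j i := by
  simp only [firstBoth, or_comm]

lemma pOf_add_pOf_eq_one {ι : ℕ → ℕ} {i j : ℕ}
    (hocc : ∃ m, 1 ≤ m ∧ (ι m = i ∨ ι m = j)) (hij : i ≠ j) :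
    pOf ι i j + pOf ι j i = 1 := by
  have hfirst : ι (firstBoth ι i j) = i ∨ ι (firstBoth ι i j) = j := (Nat.sInf_mem hocc).2
  rw [pOf, pOf, firstBoth_comm ι j i]
  rcases hfirst with h | h <;> simp [h, hij, hij.symm]

lemma Pof_succ (ι : ℕ → ℕ) {j : ℕ} (hj : 1 ≤ j) :
    Pof ι (j + 1) = Pof ι j + pOf ι (j + 1) j := by
  rw [Pof, Finset.sum_Icc_succ_top (by omega : 2 ≤ j + 1), Nat.add_sub_cancel, Pof]

/-- Exactly one of `j - 1`, `j` occurs first in `ι`. -/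
lemma Pof_add_pOf_pred {ι : ℕ → ℕ} {j : ℕ} (hj : 2 ≤ j) (hocc : ∃ m, 1 ≤ m ∧ ι m = j) :
    Pof ι j + pOf ι (j - 1) j = Pof ι (j - 1) + 1 := by
  obtain ⟨m, hm, hmj⟩ := hocc
  have hsum := pOf_add_pOf_eq_one (i := j) (j := j - 1) ⟨m, hm, Or.inl hmj⟩ (by omega)
  have hsucc := Pof_succ ι (j := j - 1) (by omega)
  rw [Nat.sub_add_cancel (by omega : 1 ≤ j)] at hsucc
  omega

theorem boxA_succ_general (n : ℕ) (ι : ℕ → ℕ)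
    (hseq : SeqCond n ι)
    (j : ℕ) (hj1 : 1 ≤ j) (hjn : j ≤ n) (s : ℤ) :
    boxA n ι (j + 1) s = boxA n ι j s - betaA n ι (s + (Pof ι j : ℤ)) j := by
  simp only [boxA, betaA, Nat.add_sub_cancel, Pof_succ ι hj1, Nat.cast_add, add_assoc]
  obtain rfl | hj2 := eq_or_lt_of_le hj1
  · simp only [Nat.sub_self, XT_index_zero]
    abel
  · obtain ⟨m, hm, hmj⟩ := hseq.2.2 j hj1 hjn 0
    have hP : (Pof ι j : ℤ) + pOf ι (j - 1) j = Pof ι (j - 1) + 1 :=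
      mod_cast Pof_add_pOf_pred hj2 ⟨m, hm, hmj⟩
    rw [hP]
    abel

/-- Type `A`: `⌈j+1⌉^A_s = ⌈j⌉^A_s − β_{s+P(j),j}` for `1 ≤ j ≤ n` and `s ≥ 1 − P(j)`. -/
theorem boxA_succ (n : ℕ) (hn : 1 ≤ n) (ι : ℕ → ℕ)
    (hseq : SeqCond n ι) (had : AdaptedA n ι)
    (j : ℕ) (hj1 : 1 ≤ j) (hjn : j ≤ n) (s : ℤ) (hs : 1 - (Pof ι j : ℤ) ≤ s) :
    boxA n ι (j + 1) s = boxA n ι j s - betaA n ι (s + (Pof ι j : ℤ)) j :=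
  boxA_succ_general n ι hseq j hj1 hjn s
end

section
/- Let g = sl₃ (type A₂) and λ a dominant integral weight with λ₁ = ⟨λ, h₁⟩, λ₂ = ⟨λ, h₂⟩. The number of triples (a, b, c) ∈ ℤ³ with b ≥ c ≥ 0, a ≥ 0, λ₁ ≥ a, λ₂ ≥ b − a, λ₂ ≥ c equals the Weyl dimension formula value dim V(λ) = (λ₁+1)(λ₂+1)(λ₁+λ₂+2)/2. -/
/-!
For fixed `a` and `c` the constraints on `b` are exactly `c ≤ b ≤ a + λ₂`, so after the
substitution `c' = λ₂ - c` the fibre over `(a, c')` has `a + c' + 1` points. Hence the count is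
`∑_{a ≤ λ₁} ∑_{c' ≤ λ₂} (a + c' + 1)`, and two inductions evaluate this double sum to the Weyl
dimension `(λ₁+1)(λ₂+1)(λ₁+λ₂+2)/2`.
-/

open Finset

def a2LatticePoints (l₁ l₂ : ℕ) : Set (ℤ × ℤ × ℤ) :=
  {t | t.2.2 ≤ t.2.1 ∧ 0 ≤ t.2.2 ∧ 0 ≤ t.1 ∧
    t.1 ≤ (l₁ : ℤ) ∧ t.2.1 - t.1 ≤ (l₂ : ℤ) ∧ t.2.2 ≤ (l₂ : ℤ)}

/-- `⟨(a, c'), d⟩` stands for the point `(a, b, c)` with `c = λ₂ - c'` and `b = c + d`. -/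
theorem bijOn_a2LatticePoints (l₁ l₂ : ℕ) :
    Set.BijOn (fun x : (_ : ℕ × ℕ) × ℕ => ((x.1.1 : ℤ), (l₂ : ℤ) - x.1.2 + x.2, (l₂ : ℤ) - x.1.2))
      ((range (l₁ + 1) ×ˢ range (l₂ + 1)).sigma fun p => range (p.1 + p.2 + 1))
      (a2LatticePoints l₁ l₂) := by
  refine Set.InvOn.bijOn
    (f' := fun t => ⟨(t.1.toNat, (l₂ - t.2.2).toNat), (t.2.1 - t.2.2).toNat⟩) ⟨?_, ?_⟩ ?_ ?_
  · rintro ⟨⟨a, c⟩, d⟩ h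
    simp only [coe_sigma, Set.mem_sigma_iff, coe_product, Set.mem_prod, mem_coe, mem_range] at h
    simp only [Sigma.mk.injEq, Prod.mk.injEq, heq_iff_eq]
    omega
  · rintro ⟨a, b, c⟩ h
    simp only [a2LatticePoints, Set.mem_ofPred_eq] at h
    simp only [Prod.mk.injEq]
    omega
  · rintro ⟨⟨a, c⟩, d⟩ h
    simp only [coe_sigma, Set.mem_sigma_iff, coe_product, Set.mem_prod, mem_coe, mem_range] at h
    simp only [a2LatticePoints, Set.mem_ofPred_eq]
    omega
  · rintro ⟨a, b, c⟩ h
    simp only [a2LatticePoints, Set.mem_ofPred_eq] at h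
    simp only [coe_sigma, Set.mem_sigma_iff, coe_product, Set.mem_prod, mem_coe, mem_range]
    omega

theorem ncard_a2LatticePoints (l₁ l₂ : ℕ) :
    (a2LatticePoints l₁ l₂).ncard = ∑ a ∈ range (l₁ + 1), ∑ c ∈ range (l₂ + 1), (a + c + 1) := by
  rw [← (bijOn_a2LatticePoints l₁ l₂).ncard_eq, Set.ncard_coe_finset, card_sigma, sum_product]
  simp only [card_range]

theorem two_mul_sum_range_add_add_one (a n : ℕ) :
    2 * ∑ c ∈ range (n + 1), (a + c + 1) = (n + 1) * (2 * a + n + 2) := by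
  induction n with
  | zero => rw [sum_range_one]; ring
  | succ n ih => rw [sum_range_succ, mul_add, ih]; ring

theorem two_mul_sum_range_sum_range_add_add_one (m n : ℕ) :
    2 * ∑ a ∈ range (m + 1), ∑ c ∈ range (n + 1), (a + c + 1) =
      (m + 1) * (n + 1) * (m + n + 2) := by
  induction m with
  | zero => rw [sum_range_one, two_mul_sum_range_add_add_one]; ring
  | succ m ih => rw [sum_range_succ, mul_add, ih, two_mul_sum_range_add_add_one]; ring

/-- Type `A₂` enumeration: the number of triples `(a,b,c) ∈ ℤ³` with
`b ≥ c ≥ 0`, `a ≥ 0`, `λ₁ ≥ a`, `λ₂ ≥ b − a`, `λ₂ ≥ c` equals the Weyl dimension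
formula value `dim V(λ) = (λ₁+1)(λ₂+1)(λ₁+λ₂+2)/2` for `sl₃`. -/
theorem A2_lattice_count (lam1 lam2 : ℕ) :
    Set.ncard {t : ℤ × ℤ × ℤ |
      t.2.2 ≤ t.2.1 ∧ 0 ≤ t.2.2 ∧ 0 ≤ t.1 ∧
      t.1 ≤ (lam1 : ℤ) ∧ t.2.1 - t.1 ≤ (lam2 : ℤ) ∧ t.2.2 ≤ (lam2 : ℤ)} =
    (lam1 + 1) * (lam2 + 1) * (lam1 + lam2 + 2) / 2 := by
  rw [← two_mul_sum_range_sum_range_add_add_one, Nat.mul_div_cancel_left _ two_pos]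
  exact ncard_a2LatticePoints lam1 lam2
end

section
/- Let g be of type A_n with adapted sequence ι and let k ∈ I satisfy neither ι^{(k)} > ι^{(k+1)} (when k < n) nor ι^{(k)} > ι^{(k-1)} (when k > 1). Define λ^{(k)} = −x_{1,k} + ⟨λ, h_k⟩. Then for all (l, j) ∈ ℤ_{≥1} × I, Ŝ_{l,j} λ^{(k)} = 0 if (l,j) = (1,k) and Ŝ_{l,j} λ^{(k)} = λ^{(k)} otherwise; consequently Ξ_{ι,k}[λ] = {0, λ^{(k)}}. -/
/-- The Cartan matrix pairing `⟨h_i, α_j⟩` of type `A` (valid on indices `1,…,n`). -/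
def CartanA (i j : ℕ) : ℤ := if i = j then 2 else if i = j + 1 ∨ j = i + 1 then -1 else 0

/-- Affine-linear functions on `ℚ^∞` in absolute coordinates `x_m` (`m ≥ 1`). -/
abbrev AffAbs : Type := ℚ × (ℕ → ℚ)

/-- `β_k⁽⁺⁾`. -/
def betaPosAbs (C : ℕ → ℕ → ℤ) (ι kp : ℕ → ℕ) (k : ℕ) : AffAbs :=
  (0, fun j =>
    (if j = k then 1 else 0) + (if k < j ∧ j < kp k then (C (ι k) (ι j) : ℚ) else 0) +
      (if j = kp k then 1 else 0))

/-- `β_k⁽⁻⁾` (with constant term `−⟨h_{i_k}, λ⟩` when `k⁽⁻⁾ = 0`). -/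
def betaNegAbs (C : ℕ → ℕ → ℤ) (ι km : ℕ → ℕ) (lam : ℕ → ℤ) (k : ℕ) : AffAbs :=
  if km k = 0 then
    (-(lam (ι k) : ℚ),
      fun j => (if 1 ≤ j ∧ j < k then (C (ι k) (ι j) : ℚ) else 0) + (if j = k then 1 else 0))
  else
    (0, fun j =>
      (if j = km k then 1 else 0) + (if km k < j ∧ j < k then (C (ι k) (ι j) : ℚ) else 0) +
        (if j = k then 1 else 0))

/-- The operator `Ŝ_k` in absolute coordinates. -/
def ShatAbs (C : ℕ → ℕ → ℤ) (ι kp km : ℕ → ℕ) (lam : ℕ → ℤ) (k : ℕ) (φ : AffAbs) : AffAbs :=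
  if 0 < φ.2 k then φ - φ.2 k • betaPosAbs C ι kp k
  else φ - φ.2 k • betaNegAbs C ι km lam k

def IsKp (ι kp : ℕ → ℕ) : Prop :=
  ∀ k, 1 ≤ k → k < kp k ∧ ι (kp k) = ι k ∧ ∀ l, k < l → ι l = ι k → kp k ≤ l

def IsKm (ι km : ℕ → ℕ) : Prop :=
  ∀ k, 1 ≤ k →
    (km k = 0 ∧ ∀ l, 1 ≤ l → l < k → ι l ≠ ι k) ∨
    (1 ≤ km k ∧ km k < k ∧ ι (km k) = ι k ∧ ∀ l, 1 ≤ l → l < k → ι l = ι k → l ≤ km k)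

/-- The generator `λ⁽ᵏ⁾ = ⟨h_k,λ⟩ − Σ_{1≤j<ι⁽ᵏ⁾} ⟨h_k, α_{i_j}⟩ x_j − x_{ι⁽ᵏ⁾}`
(which equals `−x_{1,k} + ⟨λ,h_k⟩` under the hypotheses below). -/
noncomputable def lamGenA (ι : ℕ → ℕ) (lam : ℕ → ℤ) (k : ℕ) : AffAbs :=
  ((lam k : ℚ), fun j =>
    -((if 1 ≤ j ∧ j < firstOcc ι k then (CartanA k (ι j) : ℚ) else 0) +
      (if j = firstOcc ι k then 1 else 0)))


/-! Neither neighbour of `k` occurs in `ι` before `k`, so `λ⁽ᵏ⁾ = ⟨h_k,λ⟩ − x_{ι⁽ᵏ⁾}`. Since `k` has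
no earlier occurrence, `β⁽⁻⁾` at `ι⁽ᵏ⁾` carries the constant `−⟨h_k,λ⟩`, and `λ⁽ᵏ⁾` is exactly its
negative, so `Ŝ_{ι⁽ᵏ⁾}` sends it to `0`. Every other `Ŝ_m` sees a zero coefficient at `x_m` and
fixes `λ⁽ᵏ⁾`, and all `Ŝ_m` fix `0`; the orbit is therefore `{0, λ⁽ᵏ⁾}`. -/

section Orbit

variable {α β : Type*}

theorem setOf_foldr_eq_pair (P : β → Prop) (f : β → α → α) {x z : α} {p : β}
    (hp : P p) (hfp : f p x = z) (hx : ∀ m, P m → f m x = z ∨ f m x = x)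
    (hz : ∀ m, f m z = z) :
    {ψ : α | ∃ L : List β, (∀ m ∈ L, P m) ∧ ψ = L.foldr f x} = {z, x} := by
  ext ψ
  constructor
  · rintro ⟨L, hL, rfl⟩
    induction L with
    | nil => exact Or.inr rfl
    | cons a L ih =>
      rcases ih fun m hm => hL m (List.mem_cons_of_mem a hm) with h | h
      · rw [List.foldr_cons, h]
        exact Or.inl (hz a)
      · rw [List.foldr_cons, Set.mem_singleton_iff.mp h]
        exact hx a (hL a List.mem_cons_self)
  · rintro (rfl | rfl)
    · exact ⟨[p], by simpa using hp, hfp.symm⟩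
    · exact ⟨[], by simp, rfl⟩

end Orbit

theorem firstOcc_le {ι : ℕ → ℕ} {i m : ℕ} (hm : 1 ≤ m) (h : ι m = i) : firstOcc ι i ≤ m :=
  Nat.sInf_le ⟨hm, h⟩

theorem firstOcc_spec {ι : ℕ → ℕ} {i : ℕ} (h : ∃ m, 1 ≤ m ∧ ι m = i) :
    1 ≤ firstOcc ι i ∧ ι (firstOcc ι i) = i :=
  Nat.sInf_mem h

theorem IsKm.eq_zero_at_firstOcc {ι km : ℕ → ℕ} (hkm : IsKm ι km) {i : ℕ}
    (h1 : 1 ≤ firstOcc ι i) (hi : ι (firstOcc ι i) = i) : km (firstOcc ι i) = 0 := by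
  rcases hkm _ h1 with h | ⟨hpos, hlt, heq, -⟩
  · exact h.1
  · exact absurd (firstOcc_le hpos (heq.trans hi)) (by omega)

theorem CartanA_eq_zero_of_not_adj {i j : ℕ} (hne : i ≠ j) (hadj : ¬(i = j + 1 ∨ j = i + 1)) :
    CartanA i j = 0 := by
  simp only [CartanA, if_neg hne, if_neg hadj]

theorem CartanA_eq_zero_of_lt_firstOcc {n : ℕ} {ι : ℕ → ℕ} {k m : ℕ}
    (hc1 : ¬(k < n ∧ firstOcc ι (k + 1) < firstOcc ι k))
    (hc2 : ¬(1 < k ∧ firstOcc ι (k - 1) < firstOcc ι k))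
    (hm : 1 ≤ m) (hrange : 1 ≤ ι m ∧ ι m ≤ n) (hlt : m < firstOcc ι k) :
    CartanA k (ι m) = 0 := by
  refine CartanA_eq_zero_of_not_adj (fun h => ?_) (fun h => ?_)
  · exact absurd (firstOcc_le hm h.symm) (by omega)
  · rcases h with h | h
    · exact hc2 ⟨by omega, lt_of_le_of_lt (firstOcc_le hm (by omega)) hlt⟩
    · exact hc1 ⟨by omega, lt_of_le_of_lt (firstOcc_le hm h) hlt⟩

theorem lamGenA_snd_eq_zero {ι : ℕ → ℕ} {lam : ℕ → ℤ} {k m : ℕ} (hm : m ≠ firstOcc ι k)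
    (hC : 1 ≤ m → m < firstOcc ι k → CartanA k (ι m) = 0) : (lamGenA ι lam k).2 m = 0 := by
  by_cases h : 1 ≤ m ∧ m < firstOcc ι k <;> simp [lamGenA, hm, h, hC]

theorem lamGenA_eq_neg_betaNegAbs {ι km : ℕ → ℕ} {lam : ℕ → ℤ} {k : ℕ}
    (hk : ι (firstOcc ι k) = k) (hkm : km (firstOcc ι k) = 0) :
    lamGenA ι lam k = -betaNegAbs CartanA ι km lam (firstOcc ι k) := by
  simp only [betaNegAbs, if_pos hkm, hk, lamGenA, Prod.neg_mk, neg_neg]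
  rfl

section ShatAbs

variable (C : ℕ → ℕ → ℤ) (ι kp km : ℕ → ℕ) (lam : ℕ → ℤ)

theorem ShatAbs_of_snd_eq_zero {m : ℕ} {φ : AffAbs} (h : φ.2 m = 0) :
    ShatAbs C ι kp km lam m φ = φ := by
  simp [ShatAbs, h]

theorem betaNegAbs_snd_self {m : ℕ} (h : km m = 0) : (betaNegAbs C ι km lam m).2 m = 1 := by
  simp [betaNegAbs, h]

theorem ShatAbs_neg_betaNegAbs {m : ℕ} (h : km m = 0) :
    ShatAbs C ι kp km lam m (-betaNegAbs C ι km lam m) = 0 := by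
  simp [ShatAbs, betaNegAbs_snd_self C ι km lam h]

end ShatAbs

theorem XiK_two_elements_general (n : ℕ) (ι kp km : ℕ → ℕ) (lam : ℕ → ℤ)
    (hseq : SeqCond n ι) (hkm : IsKm ι km)
    (k : ℕ) (hk1 : 1 ≤ k) (hkn : k ≤ n)
    (hc1 : ¬(k < n ∧ firstOcc ι (k + 1) < firstOcc ι k))
    (hc2 : ¬(1 < k ∧ firstOcc ι (k - 1) < firstOcc ι k)) :
    (∀ m, 1 ≤ m →
      ShatAbs CartanA ι kp km lam m (lamGenA ι lam k) =
        if m = firstOcc ι k then (((0 : ℚ), (0 : ℕ → ℚ)) : AffAbs) else lamGenA ι lam k) ∧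
    {ψ : AffAbs | ∃ L : List ℕ, (∀ m ∈ L, 1 ≤ m) ∧
        ψ = L.foldr (ShatAbs CartanA ι kp km lam) (lamGenA ι lam k)} =
      {(((0 : ℚ), (0 : ℕ → ℚ)) : AffAbs), lamGenA ι lam k} := by
  obtain ⟨hp1, hpk⟩ := firstOcc_spec (hseq.2.2 k hk1 hkn 0)
  have hkm0 := hkm.eq_zero_at_firstOcc hp1 hpk
  have hS : ∀ m, 1 ≤ m →
      ShatAbs CartanA ι kp km lam m (lamGenA ι lam k) =
        if m = firstOcc ι k then (((0 : ℚ), (0 : ℕ → ℚ)) : AffAbs) else lamGenA ι lam k := by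
    intro m hm
    split_ifs with hmp
    · rw [hmp, lamGenA_eq_neg_betaNegAbs hpk hkm0]
      exact ShatAbs_neg_betaNegAbs _ _ _ _ _ hkm0
    · refine ShatAbs_of_snd_eq_zero _ _ _ _ _ (lamGenA_snd_eq_zero hmp fun _ hlt => ?_)
      exact CartanA_eq_zero_of_lt_firstOcc hc1 hc2 hm (hseq.1 m hm) hlt
  refine ⟨hS, setOf_foldr_eq_pair _ _ hp1 (by simpa using hS _ hp1) (fun m hm => ?_)
    fun m => ShatAbs_of_snd_eq_zero _ _ _ _ _ rfl⟩
  rw [hS m hm]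
  split_ifs
  exacts [Or.inl rfl, Or.inr rfl]

/-- Type `A_n`, `ι` adapted, `k ∈ I` such that neither `k < n ∧ ι⁽ᵏ⁾ > ι⁽ᵏ⁺¹⁾` nor
`k > 1 ∧ ι⁽ᵏ⁾ > ι⁽ᵏ⁻¹⁾` holds.  Then `Ŝ_{l,j} λ⁽ᵏ⁾ = 0` if `(l,j) = (1,k)` (i.e. the
operator at the position `ι⁽ᵏ⁾` of the first occurrence of `k`), and
`Ŝ_{l,j} λ⁽ᵏ⁾ = λ⁽ᵏ⁾` otherwise; consequently `Ξ_{ι,k}[λ] = {0, λ⁽ᵏ⁾}`. -/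
theorem XiK_two_elements (n : ℕ) (ι kp km : ℕ → ℕ) (lam : ℕ → ℤ)
    (hseq : SeqCond n ι) (had : AdaptedA n ι)
    (hkp : IsKp ι kp) (hkm : IsKm ι km) (hdom : ∀ i, 0 ≤ lam i)
    (k : ℕ) (hk1 : 1 ≤ k) (hkn : k ≤ n)
    (hc1 : ¬(k < n ∧ firstOcc ι (k + 1) < firstOcc ι k))
    (hc2 : ¬(1 < k ∧ firstOcc ι (k - 1) < firstOcc ι k)) :
    (∀ m, 1 ≤ m →
      ShatAbs CartanA ι kp km lam m (lamGenA ι lam k) =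
        if m = firstOcc ι k then (((0 : ℚ), (0 : ℕ → ℚ)) : AffAbs) else lamGenA ι lam k) ∧
    {ψ : AffAbs | ∃ L : List ℕ, (∀ m ∈ L, 1 ≤ m) ∧
        ψ = L.foldr (ShatAbs CartanA ι kp km lam) (lamGenA ι lam k)} =
      {(((0 : ℚ), (0 : ℕ → ℚ)) : AffAbs), lamGenA ι lam k} :=
  XiK_two_elements_general n ι kp km lam hseq hkm k hk1 hkn hc1 hc2
end

section
/- Coefficient support of a type-A column tableau: let j₁ < ⋯ < j_k in {1,...,n+1}, s ∈ ℤ, and T = [j₁,...,j_k]^A_s. Set j₀ = 0 and j_{k+1} = n+2. Then for (m, j) ∈ ℤ_{≥1} × I, the coefficient of x_{m,j} in T is nonzero if and only if either (m,j) = (s+k−i+P(j_i), j_i) for some i with j_{i+1} > j_i + 1 (coefficient +1), or (m,j) = (s+k−i+1+P(j_i−1), j_i−1) for some i with j_i − 1 > j_{i−1} (coefficient −1). -/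
/-! Every box `⌈j_a⌉` of the column contributes `+x` at `(s + k - 1 - a + P(j_a), j_a)` and
`-x` at `(s + k - a + P(j_a - 1), j_a - 1)`. As the entries are distinct, the coefficient of
`x_{m,jj}` is `[some box has j_a = jj at the right height] - [some box has j_b = jj + 1 at the
right height]`. The two heights agree exactly when `b = a + 1`, so both brackets are `1` iff
the entries `j_a, j_{a+1}` are adjacent, and then the two contributions cancel. -/

section Coefficients

variable {n : ℕ} {ι : ℕ → ℕ} {m : ℤ} {jj : ℕ}

lemma XT_apply_of_mem (hm : 1 ≤ m) (hjj1 : 1 ≤ jj) (hjjn : jj ≤ n) (x : ℤ) (y : ℕ) :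
    XT n x y (m, jj) = if m = x ∧ jj = y then 1 else 0 := by
  by_cases h : m = x ∧ jj = y
  · obtain ⟨rfl, rfl⟩ := h
    simp [XT, hm, hjj1, hjjn]
  · simp only [XT, Prod.mk.injEq, if_neg h]
    exact if_neg fun h' => h h'.1

lemma boxA_apply (hm : 1 ≤ m) (hjj1 : 1 ≤ jj) (hjjn : jj ≤ n) (jv : ℕ) (s' : ℤ) :
    boxA n ι jv s' (m, jj) =
      (if jv = jj ∧ m = s' + Pof ι jj then 1 else 0) -
        (if jv = jj + 1 ∧ m = s' + Pof ι jj + 1 then 1 else 0) := by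
  simp only [boxA, Pi.sub_apply, XT_apply_of_mem hm hjj1 hjjn]
  congr 1 <;> refine if_congr ?_ rfl rfl
  · constructor
    · rintro ⟨h, rfl⟩
      exact ⟨rfl, h⟩
    · rintro ⟨rfl, h⟩
      exact ⟨h, rfl⟩
  · have hjv : jj = jv - 1 ↔ jv = jj + 1 := by omega
    constructor
    · rintro ⟨h, hj⟩
      exact ⟨hjv.mp hj, hj ▸ h⟩
    · rintro ⟨hj, h⟩
      exact ⟨by rwa [← hjv.mpr hj], hjv.mpr hj⟩

lemma tabA_apply (hm : 1 ≤ m) (hjj1 : 1 ≤ jj) (hjjn : jj ≤ n) {k : ℕ} {j : Fin k → ℕ}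
    (hj : Function.Injective j) (s : ℤ) :
    tabA n ι j s (m, jj) =
      (if ∃ a : Fin k, j a = jj ∧ m = s + k - 1 - (a : ℕ) + Pof ι jj then 1 else 0) -
        (if ∃ a : Fin k, j a = jj + 1 ∧ m = s + k - 1 - (a : ℕ) + Pof ι jj + 1
          then 1 else 0) := by
  simp only [tabA, Finset.sum_apply, boxA_apply hm hjj1 hjjn, Finset.sum_sub_distrib]
  rw [Finset.sum_ite_zero _ _ fun a _ b _ ha hb => hj (ha.1.trans hb.1.symm),
    Finset.sum_ite_zero _ _ fun a _ b _ ha hb => hj (ha.1.trans hb.1.symm)]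
  simp only [Finset.mem_univ, true_and]

end Coefficients

section Cancellation

variable {k : ℕ} {j : Fin k → ℕ} (P : ℕ → ℕ) (s m : ℤ) (jj : ℕ)

lemma exists_gap_above_iff (hj : StrictMono j) :
    (∃ a : Fin k, jj = j a ∧ m = s + k - 1 - (a : ℕ) + P (j a) ∧
        ∀ a' : Fin k, (a' : ℕ) = a + 1 → j a + 1 < j a') ↔
      (∃ a : Fin k, j a = jj ∧ m = s + k - 1 - (a : ℕ) + P jj) ∧
        ¬∃ b : Fin k, j b = jj + 1 ∧ m = s + k - 1 - (b : ℕ) + P jj + 1 := by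
  constructor
  · rintro ⟨a, rfl, hm, hgap⟩
    refine ⟨⟨a, rfl, hm⟩, ?_⟩
    rintro ⟨b, hjb, hmb⟩
    have hab : a < b := hj.lt_iff_lt.mp (by omega)
    have := hgap b (by omega)
    omega
  · rintro ⟨⟨a, rfl, hm⟩, hnone⟩
    refine ⟨a, rfl, hm, fun b hb => ?_⟩
    have hjab : j a < j b := hj (Fin.lt_def.mpr (by omega))
    by_contra hle
    exact hnone ⟨b, by omega, by omega⟩

lemma exists_gap_below_iff (hj : StrictMono j) (hjj : 1 ≤ jj) :
    (∃ a : Fin k, jj = j a - 1 ∧ m = s + k - (a : ℕ) + P (j a - 1) ∧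
        ((a : ℕ) = 0 → 1 < j a) ∧ ∀ a' : Fin k, (a' : ℕ) + 1 = a → j a' + 1 < j a) ↔
      (∃ b : Fin k, j b = jj + 1 ∧ m = s + k - 1 - (b : ℕ) + P jj + 1) ∧
        ¬∃ a : Fin k, j a = jj ∧ m = s + k - 1 - (a : ℕ) + P jj := by
  constructor
  · rintro ⟨b, hjb, hm, -, hgap⟩
    obtain rfl : j b - 1 = jj := hjb.symm
    refine ⟨⟨b, by omega, by omega⟩, ?_⟩
    rintro ⟨a, hja, hma⟩
    have hab : a < b := hj.lt_iff_lt.mp (by omega)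
    have := hgap a (by omega)
    omega
  · rintro ⟨⟨b, hjb, hm⟩, hnone⟩
    obtain rfl : jj = j b - 1 := by omega
    refine ⟨b, rfl, by omega, fun _ => by omega, fun a ha => ?_⟩
    have hjab : j a < j b := hj (Fin.lt_def.mpr (by omega))
    by_contra hle
    exact hnone ⟨a, by omega, by omega⟩

end Cancellation

theorem tabA_support_general (n : ℕ) (ι : ℕ → ℕ)
    (k : ℕ) (j : Fin k → ℕ) (hmono : StrictMono j) (s : ℤ)
    (m : ℤ) (jj : ℕ) (hm1 : 1 ≤ m) (hjj1 : 1 ≤ jj) (hjjn : jj ≤ n) :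
    (tabA n ι j s (m, jj) ≠ 0 ↔
      ((∃ a : Fin k, jj = j a ∧
          m = s + (k : ℤ) - 1 - ((a : ℕ) : ℤ) + (Pof ι (j a) : ℤ) ∧
          ∀ a' : Fin k, (a' : ℕ) = (a : ℕ) + 1 → j a + 1 < j a') ∨
       (∃ a : Fin k, jj = j a - 1 ∧
          m = s + (k : ℤ) - ((a : ℕ) : ℤ) + (Pof ι (j a - 1) : ℤ) ∧
          ((a : ℕ) = 0 → 1 < j a) ∧
          ∀ a' : Fin k, (a' : ℕ) + 1 = (a : ℕ) → j a' + 1 < j a))) ∧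
    (∀ a : Fin k, jj = j a →
        m = s + (k : ℤ) - 1 - ((a : ℕ) : ℤ) + (Pof ι (j a) : ℤ) →
        (∀ a' : Fin k, (a' : ℕ) = (a : ℕ) + 1 → j a + 1 < j a') →
        tabA n ι j s (m, jj) = 1) ∧
    (∀ a : Fin k, jj = j a - 1 →
        m = s + (k : ℤ) - ((a : ℕ) : ℤ) + (Pof ι (j a - 1) : ℤ) →
        ((a : ℕ) = 0 → 1 < j a) →
        (∀ a' : Fin k, (a' : ℕ) + 1 = (a : ℕ) → j a' + 1 < j a) →
        tabA n ι j s (m, jj) = -1) := by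
  have hval := tabA_apply (ι := ι) hm1 hjj1 hjjn hmono.injective s
  have above := exists_gap_above_iff (Pof ι) s m jj hmono
  have below := exists_gap_below_iff (Pof ι) s m jj hmono hjj1
  refine ⟨?_, fun a hj hm hgap => ?_, fun a hj hm h0 hgap => ?_⟩
  · rw [hval, above, below]
    split_ifs <;> simp_all
  · obtain ⟨hplus, hminus⟩ := above.mp ⟨a, hj, hm, hgap⟩
    rw [hval, if_pos hplus, if_neg hminus, sub_zero]
  · obtain ⟨hminus, hplus⟩ := below.mp ⟨a, hj, hm, h0, hgap⟩
    rw [hval, if_pos hminus, if_neg hplus, zero_sub]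

/-- Coefficient support of a type-`A` column tableau.  For `j₁ < ⋯ < j_k` in `{1,…,n+1}`
(`0`-indexed `a ↦ j_{a+1}`), `T = [j₁,…,j_k]^A_s`, and `(m, jj) ∈ ℤ_{≥1} × I`:
the coefficient of `x_{m,jj}` in `T` is nonzero iff either
`(m,jj) = (s+k−i+P(j_i), j_i)` for some `i = a+1` with `j_{i+1} > j_i + 1`
(coefficient `+1`; convention `j_{k+1} = n+2`), or
`(m,jj) = (s+k−i+1+P(j_i−1), j_i−1)` for some `i = a+1` with `j_i − 1 > j_{i−1}`
(coefficient `−1`; convention `j₀ = 0`). -/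
theorem tabA_support (n : ℕ) (ι : ℕ → ℕ)
    (hseq : SeqCond n ι) (had : AdaptedA n ι)
    (k : ℕ) (hk : 1 ≤ k) (j : Fin k → ℕ) (hmono : StrictMono j)
    (hrange : ∀ i, 1 ≤ j i ∧ j i ≤ n + 1) (s : ℤ)
    (m : ℤ) (jj : ℕ) (hm1 : 1 ≤ m) (hjj1 : 1 ≤ jj) (hjjn : jj ≤ n) :
    (tabA n ι j s (m, jj) ≠ 0 ↔
      ((∃ a : Fin k, jj = j a ∧
          m = s + (k : ℤ) - 1 - ((a : ℕ) : ℤ) + (Pof ι (j a) : ℤ) ∧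
          ∀ a' : Fin k, (a' : ℕ) = (a : ℕ) + 1 → j a + 1 < j a') ∨
       (∃ a : Fin k, jj = j a - 1 ∧
          m = s + (k : ℤ) - ((a : ℕ) : ℤ) + (Pof ι (j a - 1) : ℤ) ∧
          ((a : ℕ) = 0 → 1 < j a) ∧
          ∀ a' : Fin k, (a' : ℕ) + 1 = (a : ℕ) → j a' + 1 < j a))) ∧
    (∀ a : Fin k, jj = j a →
        m = s + (k : ℤ) - 1 - ((a : ℕ) : ℤ) + (Pof ι (j a) : ℤ) →
        (∀ a' : Fin k, (a' : ℕ) = (a : ℕ) + 1 → j a + 1 < j a') →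
        tabA n ι j s (m, jj) = 1) ∧
    (∀ a : Fin k, jj = j a - 1 →
        m = s + (k : ℤ) - ((a : ℕ) : ℤ) + (Pof ι (j a - 1) : ℤ) →
        ((a : ℕ) = 0 → 1 < j a) →
        (∀ a' : Fin k, (a' : ℕ) + 1 = (a : ℕ) → j a' + 1 < j a) →
        tabA n ι j s (m, jj) = -1) :=
  tabA_support_general n ι k j hmono s m jj hm1 hjj1 hjjn
end

section
/- Let g = sl₃ (type A₂) with ι = (...,2,1,2,1,2,1) and any λ ∈ P₊. Then, with Ξ_ι[λ] the set of all functions generated from x_j (j ≥ 1) and λ^{(1)}, λ^{(2)} by the Ŝ operators, one has Ξ_ι[λ] = {x_{k,1}, x_{k,2}−x_{k+1,1}, −x_{k+1,2}, x_{k,2}, x_{k+1,1}−x_{k+1,2}, −x_{k+2,1} : k ≥ 1} ∪ {0, λ^{(1)}, λ^{(2)}, ⟨h₂,λ⟩ − x_{2,1}}, where λ^{(1)} = ⟨h₁,λ⟩ − x_{1,1} and λ^{(2)} = ⟨h₂,λ⟩ + x_{1,1} − x_{1,2}. -/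
/-! Type `A₂`, `ι = (…,2,1,2,1,2,1)`: complete description of `Ξ_ι[λ]`.
Coordinates are absolute: `x_{l,1} = x_{2l−1}` and `x_{l,2} = x_{2l}`. -/

/-- Affine-linear functions on `ℚ^∞`. -/
abbrev AffForm : Type := ℚ × (ℕ → ℚ)

/-- The coordinate coefficient vector `e_j` of `x_j`. -/
def e (j : ℕ) : ℕ → ℚ := fun j' => if j' = j then 1 else 0

/-- The sequence `ι = (…,2,1,2,1,2,1)`: `ι m = 1` for `m` odd, `ι m = 2` for `m` even. -/
def iota2 : ℕ → ℕ := fun m => if m % 2 = 1 then 1 else 2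

/-- `k⁺ = k + 2` for this `ι`. -/
def kp2 : ℕ → ℕ := fun k => k + 2

/-- `k⁻ = k − 2` (so `k⁻ = 0` for `k ≤ 2`) for this `ι`. -/
def km2 : ℕ → ℕ := fun k => k - 2

/-- The type `A₂` Cartan pairing `⟨h_i, α_j⟩` on indices `1, 2`. -/
def C2 : ℕ → ℕ → ℤ := fun i j =>
  if i = j then 2 else if (i = 1 ∧ j = 2) ∨ (i = 2 ∧ j = 1) then -1 else 0

/-- `β_k⁽⁺⁾`. -/
def betaPos2 (k : ℕ) : AffForm :=
  (0, fun j =>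
    (if j = k then 1 else 0) + (if k < j ∧ j < kp2 k then (C2 (iota2 k) (iota2 j) : ℚ) else 0) +
      (if j = kp2 k then 1 else 0))

/-- `β_k⁽⁻⁾`. -/
def betaNeg2 (lam : ℕ → ℤ) (k : ℕ) : AffForm :=
  if km2 k = 0 then
    (-(lam (iota2 k) : ℚ),
      fun j => (if 1 ≤ j ∧ j < k then (C2 (iota2 k) (iota2 j) : ℚ) else 0) +
        (if j = k then 1 else 0))
  else
    (0, fun j =>
      (if j = km2 k then 1 else 0) +
        (if km2 k < j ∧ j < k then (C2 (iota2 k) (iota2 j) : ℚ) else 0) +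
        (if j = k then 1 else 0))

/-- The operator `Ŝ_k`. -/
def Shat2 (lam : ℕ → ℤ) (k : ℕ) (φ : AffForm) : AffForm :=
  if 0 < φ.2 k then φ - φ.2 k • betaPos2 k else φ - φ.2 k • betaNeg2 lam k

/-- `λ⁽¹⁾ = ⟨h₁,λ⟩ − x_{1,1}`. -/
def lamF1 (lam : ℕ → ℤ) : AffForm := ((lam 1 : ℚ), -(e 1))

/-- `λ⁽²⁾ = ⟨h₂,λ⟩ + x_{1,1} − x_{1,2}`. -/
def lamF2 (lam : ℕ → ℤ) : AffForm := ((lam 2 : ℚ), e 1 - e 2)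

/-- `Ξ_ι[λ]`: all functions generated from the `x_j` (`j ≥ 1`) and `λ⁽¹⁾, λ⁽²⁾` by the
operators `Ŝ_k` (`k ≥ 1`). -/
def XiSet2 (lam : ℕ → ℤ) : Set AffForm :=
  {ψ | ∃ g : AffForm,
    ((∃ jj, 1 ≤ jj ∧ g = ((0 : ℚ), e jj)) ∨ g = lamF1 lam ∨ g = lamF2 lam) ∧
    ∃ L : List ℕ, (∀ m ∈ L, 1 ≤ m) ∧ ψ = L.foldr (Shat2 lam) g}
lemma iota2_add_two (n : ℕ) : iota2 (n+2) = iota2 n := by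
  unfold iota2
  have : (n+2) % 2 = n % 2 := by omega
  rw [this]

lemma C2_succ (k : ℕ) : C2 (iota2 k) (iota2 (k+1)) = -1 := by
  unfold C2 iota2
  have h2 : (k+1) % 2 = 1 - k % 2 := by omega
  rcases Nat.mod_two_eq_zero_or_one k with h | h <;> simp [h, h2]

lemma C2_succ' (k : ℕ) : C2 (iota2 (k+1)) (iota2 k) = -1 := by
  unfold C2 iota2
  have h2 : (k+1) % 2 = 1 - k % 2 := by omega
  rcases Nat.mod_two_eq_zero_or_one k with h | h <;> simp [h, h2]

lemma betaPos2_eq (k : ℕ) : betaPos2 k = ((0 : ℚ), e k - e (k+1) + e (k+2)) := by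
  unfold betaPos2 kp2
  refine congrArg (Prod.mk 0) ?_
  funext j
  simp only [Pi.add_apply, Pi.sub_apply, e]
  rcases eq_or_ne j (k+1) with rfl | hj
  · have h1 : ¬ (k+1 = k) := by omega
    have h2 : k < k+1 ∧ k+1 < k+2 := by omega
    have h3 : ¬ (k+1 = k+2) := by omega
    rw [if_neg h1, if_pos h2, if_neg h3, C2_succ]
    norm_num
  · have h : ¬ (k < j ∧ j < k + 2) := by omega
    rw [if_neg h, if_neg hj]
    ring

lemma betaNeg2_eq (lam : ℕ → ℤ) (n : ℕ) (hn : n ≠ 0) :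
    betaNeg2 lam (n+2) = ((0:ℚ), e n - e (n+1) + e (n+2)) := by
  unfold betaNeg2 km2
  rw [if_neg (by omega : ¬ (n + 2 - 2 = 0))]
  refine congrArg (Prod.mk 0) ?_
  funext j
  have hsub : n + 2 - 2 = n := by omega
  simp only [hsub, Pi.add_apply, Pi.sub_apply, e]
  rcases eq_or_ne j (n+1) with rfl | hj
  · have h1 : ¬ (n+1 = n) := by omega
    have h2 : n < n+1 ∧ n+1 < n+2 := by omega
    have h3 : ¬ (n+1 = n+2) := by omega
    rw [if_neg h1, if_pos h2, if_neg h3, iota2_add_two, C2_succ]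
    norm_num
  · have h : ¬ (n < j ∧ j < n + 2) := by omega
    rw [if_neg h, if_neg hj]
    ring

lemma betaNeg2_one (lam : ℕ → ℤ) : betaNeg2 lam 1 = (-(lam 1 : ℚ), e 1) := by
  unfold betaNeg2 km2
  rw [if_pos (by omega : 1 - 2 = 0)]
  have h1 : iota2 1 = 1 := rfl
  rw [h1]
  refine congrArg (Prod.mk _) ?_
  funext j
  have h : ¬ (1 ≤ j ∧ j < 1) := by omega
  rw [if_neg h]
  simp [e]

lemma betaNeg2_two (lam : ℕ → ℤ) : betaNeg2 lam 2 = (-(lam 2 : ℚ), e 2 - e 1) := by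
  unfold betaNeg2 km2
  rw [if_pos (by omega : 2 - 2 = 0)]
  have h1 : iota2 2 = 2 := rfl
  rw [h1]
  refine congrArg (Prod.mk _) ?_
  funext j
  simp only [Pi.sub_apply, e]
  rcases eq_or_ne j 1 with rfl | hj
  · have h : (1 ≤ 1 ∧ 1 < 2) := by omega
    rw [if_pos h]
    have : C2 2 (iota2 1) = -1 := rfl
    rw [this]
    norm_num
  · have h : ¬ (1 ≤ j ∧ j < 2) := by omega
    rw [if_neg h, if_neg hj]
    ring

lemma Shat2_zero (lam : ℕ → ℤ) (k : ℕ) {φ : AffForm} (h : φ.2 k = 0) : Shat2 lam k φ = φ := by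
  unfold Shat2; rw [h]; simp

lemma Shat2_one (lam : ℕ → ℤ) (k : ℕ) {φ : AffForm} (h : φ.2 k = 1) :
    Shat2 lam k φ = φ - betaPos2 k := by
  unfold Shat2; rw [h]; simp

lemma Shat2_negone (lam : ℕ → ℤ) (k : ℕ) {φ : AffForm} (h : φ.2 k = -1) :
    Shat2 lam k φ = φ + betaNeg2 lam k := by
  unfold Shat2; rw [h]
  rw [if_neg (by norm_num)]
  simp [sub_neg_eq_add]

def Rmem (lam : ℕ → ℤ) (ψ : AffForm) : Prop :=
  ψ = (((0 : ℚ), (0 : ℕ → ℚ)) : AffForm) ∨ ψ = lamF1 lam ∨ ψ = lamF2 lam ∨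
  ψ = ((lam 2 : ℚ), -(e 3)) ∨
  ∃ k : ℕ, 1 ≤ k ∧
    (ψ = ((0 : ℚ), e (2 * k - 1)) ∨
     ψ = ((0 : ℚ), e (2 * k) - e (2 * k + 1)) ∨
     ψ = ((0 : ℚ), -(e (2 * k + 2))) ∨
     ψ = ((0 : ℚ), e (2 * k)) ∨
     ψ = ((0 : ℚ), e (2 * k + 1) - e (2 * k + 2)) ∨
     ψ = ((0 : ℚ), -(e (2 * k + 3))))

lemma betaNeg2_eq' (lam : ℕ → ℤ) (n : ℕ) (hn : 3 ≤ n) :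
    betaNeg2 lam n = ((0:ℚ), e (n-2) - e (n-1) + e n) := by
  obtain ⟨p, rfl⟩ : ∃ p, n = p + 2 := ⟨n - 2, by omega⟩
  rw [betaNeg2_eq lam p (by omega), show p+2-2 = p from by omega,
    show p+2-1 = p+1 from by omega]

lemma Rmem_closure (lam : ℕ → ℤ) (m : ℕ) (ψ : AffForm) (h : Rmem lam ψ) :
    Rmem lam (Shat2 lam m ψ) := by
  rcases h with rfl | rfl | rfl | rfl | ⟨k, hk, h⟩
  · rw [Shat2_zero lam m (rfl : ((0:ℚ),(0:ℕ→ℚ)).2 m = 0)]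
    exact Or.inl rfl
  · rcases eq_or_ne m 1 with rfl | hm
    · have hc : (lamF1 lam).2 1 = -1 := by simp [lamF1, e]
      rw [Shat2_negone _ _ hc, betaNeg2_one]
      refine Or.inl ?_
      unfold lamF1
      simp only [Prod.mk_add_mk, Prod.mk.injEq]
      exact ⟨by ring, by ring⟩
    · have hc : (lamF1 lam).2 m = 0 := by simp [lamF1, e, hm]
      rw [Shat2_zero _ _ hc]
      exact Or.inr (Or.inl rfl)
  · rcases eq_or_ne m 1 with rfl | hm1
    · have hc : (lamF2 lam).2 1 = 1 := by norm_num [lamF2, e]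
      rw [Shat2_one _ _ hc, betaPos2_eq,
        show (1:ℕ)+1 = 2 from rfl, show (1:ℕ)+2 = 3 from rfl]
      refine Or.inr (Or.inr (Or.inr (Or.inl ?_)))
      unfold lamF2
      simp only [Prod.mk_sub_mk, Prod.mk.injEq]
      exact ⟨by ring, by ring⟩
    · rcases eq_or_ne m 2 with rfl | hm2
      · have hc : (lamF2 lam).2 2 = -1 := by norm_num [lamF2, e]
        rw [Shat2_negone _ _ hc, betaNeg2_two]
        refine Or.inl ?_
        unfold lamF2
        simp only [Prod.mk_add_mk, Prod.mk.injEq]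
        exact ⟨by ring, by ring⟩
      · have hc : (lamF2 lam).2 m = 0 := by simp [lamF2, e, hm1, hm2]
        rw [Shat2_zero _ _ hc]
        exact Or.inr (Or.inr (Or.inl rfl))
  · rcases eq_or_ne m 3 with rfl | hm
    · have hc : (((lam 2 : ℚ), -(e 3)) : AffForm).2 3 = -1 := by simp [e]
      rw [Shat2_negone _ _ hc, betaNeg2_eq' lam 3 le_rfl,
        show (3:ℕ)-2 = 1 from rfl, show (3:ℕ)-1 = 2 from rfl]
      refine Or.inr (Or.inr (Or.inl ?_))
      unfold lamF2
      simp only [Prod.mk_add_mk, Prod.mk.injEq]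
      exact ⟨by ring, by ring⟩
    · have hc : (((lam 2 : ℚ), -(e 3)) : AffForm).2 m = 0 := by simp [e, hm]
      rw [Shat2_zero _ _ hc]
      exact Or.inr (Or.inr (Or.inr (Or.inl rfl)))
  · -- six families
    rcases h with rfl | rfl | rfl | rfl | rfl | rfl
    · -- e (2k-1)
      rcases eq_or_ne m (2*k-1) with rfl | hm
      · have hc : (((0:ℚ), e (2*k-1)) : AffForm).2 (2*k-1) = 1 := by simp [e]
        rw [Shat2_one _ _ hc, betaPos2_eq,
          show 2*k-1+1 = 2*k from by omega, show 2*k-1+2 = 2*k+1 from by omega]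
        refine Or.inr (Or.inr (Or.inr (Or.inr ⟨k, hk, Or.inr (Or.inl ?_)⟩)))
        simp only [Prod.mk_sub_mk, Prod.mk.injEq]
        exact ⟨by ring, by ring⟩
      · have hc : (((0:ℚ), e (2*k-1)) : AffForm).2 m = 0 := by simp [e, hm]
        rw [Shat2_zero _ _ hc]
        exact Or.inr (Or.inr (Or.inr (Or.inr ⟨k, hk, Or.inl rfl⟩)))
    · -- e (2k) - e (2k+1)
      rcases eq_or_ne m (2*k) with rfl | hm1
      · have h1 : (2*k : ℕ) ≠ 2*k+1 := by omega
        have hc : (((0:ℚ), e (2*k) - e (2*k+1)) : AffForm).2 (2*k) = 1 := by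
          simp [e, h1]
        rw [Shat2_one _ _ hc, betaPos2_eq]
        refine Or.inr (Or.inr (Or.inr (Or.inr ⟨k, hk, Or.inr (Or.inr (Or.inl ?_))⟩)))
        simp only [Prod.mk_sub_mk, Prod.mk.injEq]
        exact ⟨by ring, by ring⟩
      · rcases eq_or_ne m (2*k+1) with rfl | hm2
        · have h1 : (2*k+1 : ℕ) ≠ 2*k := by omega
          have hc : (((0:ℚ), e (2*k) - e (2*k+1)) : AffForm).2 (2*k+1) = -1 := by
            simp [e, h1]
          rw [Shat2_negone _ _ hc, betaNeg2_eq' lam (2*k+1) (by omega),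
            show 2*k+1-2 = 2*k-1 from by omega, show 2*k+1-1 = 2*k from by omega]
          refine Or.inr (Or.inr (Or.inr (Or.inr ⟨k, hk, Or.inl ?_⟩)))
          simp only [Prod.mk_add_mk, Prod.mk.injEq]
          exact ⟨by ring, by ring⟩
        · have hc : (((0:ℚ), e (2*k) - e (2*k+1)) : AffForm).2 m = 0 := by
            simp [e, hm1, hm2]
          rw [Shat2_zero _ _ hc]
          exact Or.inr (Or.inr (Or.inr (Or.inr ⟨k, hk, Or.inr (Or.inl rfl)⟩)))
    · -- -(e (2k+2))
      rcases eq_or_ne m (2*k+2) with rfl | hm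
      · have hc : (((0:ℚ), -(e (2*k+2))) : AffForm).2 (2*k+2) = -1 := by simp [e]
        rw [Shat2_negone _ _ hc, betaNeg2_eq' lam (2*k+2) (by omega),
          show 2*k+2-2 = 2*k from by omega, show 2*k+2-1 = 2*k+1 from by omega]
        refine Or.inr (Or.inr (Or.inr (Or.inr ⟨k, hk, Or.inr (Or.inl ?_)⟩)))
        simp only [Prod.mk_add_mk, Prod.mk.injEq]
        exact ⟨by ring, by ring⟩
      · have hc : (((0:ℚ), -(e (2*k+2))) : AffForm).2 m = 0 := by simp [e, hm]
        rw [Shat2_zero _ _ hc]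
        exact Or.inr (Or.inr (Or.inr (Or.inr ⟨k, hk, Or.inr (Or.inr (Or.inl rfl))⟩)))
    · -- e (2k)
      rcases eq_or_ne m (2*k) with rfl | hm
      · have hc : (((0:ℚ), e (2*k)) : AffForm).2 (2*k) = 1 := by simp [e]
        rw [Shat2_one _ _ hc, betaPos2_eq]
        refine Or.inr (Or.inr (Or.inr (Or.inr ⟨k, hk, Or.inr (Or.inr (Or.inr (Or.inr (Or.inl ?_))))⟩)))
        simp only [Prod.mk_sub_mk, Prod.mk.injEq]
        exact ⟨by ring, by ring⟩
      · have hc : (((0:ℚ), e (2*k)) : AffForm).2 m = 0 := by simp [e, hm]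
        rw [Shat2_zero _ _ hc]
        exact Or.inr (Or.inr (Or.inr (Or.inr ⟨k, hk, Or.inr (Or.inr (Or.inr (Or.inl rfl)))⟩)))
    · -- e (2k+1) - e (2k+2)
      rcases eq_or_ne m (2*k+1) with rfl | hm1
      · have h1 : (2*k+1 : ℕ) ≠ 2*k+2 := by omega
        have hc : (((0:ℚ), e (2*k+1) - e (2*k+2)) : AffForm).2 (2*k+1) = 1 := by
          simp [e, h1]
        rw [Shat2_one _ _ hc, betaPos2_eq]
        refine Or.inr (Or.inr (Or.inr (Or.inr ⟨k, hk, Or.inr (Or.inr (Or.inr (Or.inr (Or.inr ?_))))⟩)))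
        simp only [Prod.mk_sub_mk, Prod.mk.injEq]
        exact ⟨by ring, by ring⟩
      · rcases eq_or_ne m (2*k+2) with rfl | hm2
        · have h1 : (2*k+2 : ℕ) ≠ 2*k+1 := by omega
          have hc : (((0:ℚ), e (2*k+1) - e (2*k+2)) : AffForm).2 (2*k+2) = -1 := by
            simp [e, h1]
          rw [Shat2_negone _ _ hc, betaNeg2_eq' lam (2*k+2) (by omega),
            show 2*k+2-2 = 2*k from by omega, show 2*k+2-1 = 2*k+1 from by omega]
          refine Or.inr (Or.inr (Or.inr (Or.inr ⟨k, hk, Or.inr (Or.inr (Or.inr (Or.inl ?_)))⟩)))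
          simp only [Prod.mk_add_mk, Prod.mk.injEq]
          exact ⟨by ring, by ring⟩
        · have hc : (((0:ℚ), e (2*k+1) - e (2*k+2)) : AffForm).2 m = 0 := by
            simp [e, hm1, hm2]
          rw [Shat2_zero _ _ hc]
          exact Or.inr (Or.inr (Or.inr (Or.inr ⟨k, hk, Or.inr (Or.inr (Or.inr (Or.inr (Or.inl rfl))))⟩)))
    · -- -(e (2k+3))
      rcases eq_or_ne m (2*k+3) with rfl | hm
      · have hc : (((0:ℚ), -(e (2*k+3))) : AffForm).2 (2*k+3) = -1 := by simp [e]
        rw [Shat2_negone _ _ hc, betaNeg2_eq' lam (2*k+3) (by omega),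
          show 2*k+3-2 = 2*k+1 from by omega, show 2*k+3-1 = 2*k+2 from by omega]
        refine Or.inr (Or.inr (Or.inr (Or.inr ⟨k, hk, Or.inr (Or.inr (Or.inr (Or.inr (Or.inl ?_))))⟩)))
        simp only [Prod.mk_add_mk, Prod.mk.injEq]
        exact ⟨by ring, by ring⟩
      · have hc : (((0:ℚ), -(e (2*k+3))) : AffForm).2 m = 0 := by simp [e, hm]
        rw [Shat2_zero _ _ hc]
        exact Or.inr (Or.inr (Or.inr (Or.inr ⟨k, hk, Or.inr (Or.inr (Or.inr (Or.inr (Or.inr rfl))))⟩)))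

lemma Rmem_gen (lam : ℕ → ℤ) (g : AffForm)
    (hg : (∃ jj, 1 ≤ jj ∧ g = ((0 : ℚ), e jj)) ∨ g = lamF1 lam ∨ g = lamF2 lam) :
    Rmem lam g := by
  rcases hg with ⟨jj, hjj, rfl⟩ | rfl | rfl
  · rcases Nat.even_or_odd jj with ⟨c, hc⟩ | ⟨c, hc⟩
    · refine Or.inr (Or.inr (Or.inr (Or.inr ⟨c, by omega, Or.inr (Or.inr (Or.inr (Or.inl ?_)))⟩)))
      rw [show 2*c = jj from by omega]
    · refine Or.inr (Or.inr (Or.inr (Or.inr ⟨c+1, by omega, Or.inl ?_⟩)))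
      rw [show 2*(c+1)-1 = jj from by omega]
  · exact Or.inr (Or.inl rfl)
  · exact Or.inr (Or.inr (Or.inl rfl))

lemma Xi_forward (lam : ℕ → ℤ) (ψ : AffForm) (h : ψ ∈ XiSet2 lam) : Rmem lam ψ := by
  obtain ⟨g, hg, L, hL, rfl⟩ := h
  induction L with
  | nil => exact Rmem_gen lam g hg
  | cons m L ih =>
      exact Rmem_closure lam m _ (ih (fun x hx => hL x (List.mem_cons_of_mem _ hx)))

lemma Xi_reverse (lam : ℕ → ℤ) (ψ : AffForm) (h : Rmem lam ψ) : ψ ∈ XiSet2 lam := by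
  rcases h with rfl | rfl | rfl | rfl | ⟨k, hk, h⟩
  · refine ⟨lamF1 lam, Or.inr (Or.inl rfl), [1], by simp, ?_⟩
    show _ = Shat2 lam 1 (lamF1 lam)
    rw [Shat2_negone _ _ (by simp [lamF1, e]), betaNeg2_one]
    unfold lamF1
    simp only [Prod.mk_add_mk, Prod.mk.injEq]
    exact ⟨by ring, by ring⟩
  · exact ⟨lamF1 lam, Or.inr (Or.inl rfl), [], by simp, rfl⟩
  · exact ⟨lamF2 lam, Or.inr (Or.inr rfl), [], by simp, rfl⟩
  · refine ⟨lamF2 lam, Or.inr (Or.inr rfl), [1], by simp, ?_⟩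
    show _ = Shat2 lam 1 (lamF2 lam)
    rw [Shat2_one _ _ (by norm_num [lamF2, e]), betaPos2_eq,
      show (1:ℕ)+1 = 2 from rfl, show (1:ℕ)+2 = 3 from rfl]
    unfold lamF2
    simp only [Prod.mk_sub_mk, Prod.mk.injEq]
    exact ⟨by ring, by ring⟩
  · have step1 : Shat2 lam (2*k-1) (((0:ℚ), e (2*k-1)) : AffForm)
        = ((0:ℚ), e (2*k) - e (2*k+1)) := by
      rw [Shat2_one _ _ (by simp [e]), betaPos2_eq,
        show 2*k-1+1 = 2*k from by omega, show 2*k-1+2 = 2*k+1 from by omega]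
      simp only [Prod.mk_sub_mk, Prod.mk.injEq]
      exact ⟨by ring, by ring⟩
    have step2 : Shat2 lam (2*k) (((0:ℚ), e (2*k)) : AffForm)
        = ((0:ℚ), e (2*k+1) - e (2*k+2)) := by
      rw [Shat2_one _ _ (by simp [e]), betaPos2_eq]
      simp only [Prod.mk_sub_mk, Prod.mk.injEq]
      exact ⟨by ring, by ring⟩
    rcases h with rfl | rfl | rfl | rfl | rfl | rfl
    · exact ⟨_, Or.inl ⟨2*k-1, by omega, rfl⟩, [], by simp, rfl⟩
    · refine ⟨((0:ℚ), e (2*k-1)), Or.inl ⟨2*k-1, by omega, rfl⟩, [2*k-1],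
        by intro m hm; simp at hm; omega, ?_⟩
      exact step1.symm
    · refine ⟨((0:ℚ), e (2*k-1)), Or.inl ⟨2*k-1, by omega, rfl⟩, [2*k, 2*k-1],
        by intro m hm; simp at hm; rcases hm with rfl | rfl <;> omega, ?_⟩
      show _ = Shat2 lam (2*k) (Shat2 lam (2*k-1) (((0:ℚ), e (2*k-1)) : AffForm))
      rw [step1]
      have h1 : (2*k:ℕ) ≠ 2*k+1 := by omega
      rw [Shat2_one _ _ (by simp [e, h1]), betaPos2_eq]
      simp only [Prod.mk_sub_mk, Prod.mk.injEq]
      exact ⟨by ring, by ring⟩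
    · exact ⟨_, Or.inl ⟨2*k, by omega, rfl⟩, [], by simp, rfl⟩
    · refine ⟨((0:ℚ), e (2*k)), Or.inl ⟨2*k, by omega, rfl⟩, [2*k],
        by intro m hm; simp at hm; omega, ?_⟩
      exact step2.symm
    · refine ⟨((0:ℚ), e (2*k)), Or.inl ⟨2*k, by omega, rfl⟩, [2*k+1, 2*k],
        by intro m hm; simp at hm; rcases hm with rfl | rfl <;> omega, ?_⟩
      show _ = Shat2 lam (2*k+1) (Shat2 lam (2*k) (((0:ℚ), e (2*k)) : AffForm))
      rw [step2]
      have h1 : (2*k+1:ℕ) ≠ 2*k+2 := by omega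
      rw [Shat2_one _ _ (by simp [e, h1]), betaPos2_eq]
      simp only [Prod.mk_sub_mk, Prod.mk.injEq]
      exact ⟨by ring, by ring⟩

/-- For type `A₂` with `ι = (…,2,1,2,1,2,1)` and `λ ∈ P₊`:
`Ξ_ι[λ] = {x_{k,1}, x_{k,2}−x_{k+1,1}, −x_{k+1,2}, x_{k,2}, x_{k+1,1}−x_{k+1,2},
−x_{k+2,1} : k ≥ 1} ∪ {0, λ⁽¹⁾, λ⁽²⁾, ⟨h₂,λ⟩ − x_{2,1}}`
(in absolute coordinates `x_{l,1} = x_{2l−1}`, `x_{l,2} = x_{2l}`). -/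
theorem XiSet2_description (lam : ℕ → ℤ) (hdom : 0 ≤ lam 1 ∧ 0 ≤ lam 2) :
    XiSet2 lam =
      {ψ : AffForm |
        ψ = (((0 : ℚ), (0 : ℕ → ℚ)) : AffForm) ∨ ψ = lamF1 lam ∨ ψ = lamF2 lam ∨
        ψ = ((lam 2 : ℚ), -(e 3)) ∨
        ∃ k : ℕ, 1 ≤ k ∧
          (ψ = ((0 : ℚ), e (2 * k - 1)) ∨
           ψ = ((0 : ℚ), e (2 * k) - e (2 * k + 1)) ∨
           ψ = ((0 : ℚ), -(e (2 * k + 2))) ∨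
           ψ = ((0 : ℚ), e (2 * k)) ∨
           ψ = ((0 : ℚ), e (2 * k + 1) - e (2 * k + 2)) ∨
           ψ = ((0 : ℚ), -(e (2 * k + 3))))} := by
  ext ψ
  exact ⟨Xi_forward lam ψ, Xi_reverse lam ψ⟩
end
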